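/- (Lemma 1, second part.) Let 0 < ρ < 1 and ε = ε_Λ(√(ρ(1−ρ)/(1+ρ))). If ε < 1/2 and the second moment of the discrete Gaussian satisfies ∑_{a∈Λ} D_{Λ,√ρ}(a)·a² ≥ ρ(1 − 2ε), then the differential entropy of the mixture density satisfies −∫_{ℝ²} f_{X̄,Ȳ} ln f_{X̄,Ȳ} dx dy ≥ ln(2π√(1−ρ²)) + 1 − 5ε; equivalently, the entropy gap h(f_{X,Y}) − h(f_{X̄,Ȳ}) (which equals the gap I(X,Y;W) − I(X̄,Ȳ;W̄) between the Wyner common information of the Gaussian pair and the mutual information of the discretized model) is at most 5ε nats. -/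

import Mathlib

/-!
Completing the square in the lattice variable writes the discretized density as
`f_{X̄,Ȳ}(x, y) = f_{X,Y}(x, y) · θ_σ(ρ(x+y)/(1+ρ)) / θ_{√ρ}(0)`, where `θ_s` is the centered
Gaussian of standard deviation `s` periodized over `Λ = bℤ` and `σ² = ρ(1-ρ)/(1+ρ)`. By
definition of the flatness factor, `b θ_σ` lies within `ε` of `1`, and so does `b θ_{√ρ}`,
which is `θ_σ` smoothed by a Gaussian. Hence `f_{X̄,Ȳ} / f_{X,Y}` lies in
`[(1-ε)/(1+ε), (1+ε)/(1-ε)]`. Now `-log f_{X,Y}` is `ln(2π√(1-ρ²))` plus a nonnegative quadratic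
form whose `f_{X,Y}`-mean is `1`: the upper ratio bound controls `log f_{X̄,Ȳ}`, the lower one
the `f_{X̄,Ȳ}`-mean of the quadratic form, and
`h(f_{X̄,Ȳ}) ≥ ln(2π√(1-ρ²)) + (1-ε)/(1+ε) - log((1+ε)/(1-ε)) ≥ ln(2π√(1-ρ²)) + 1 - 5ε`.
-/

open Real

/-- The centered Gaussian density with standard deviation `σ`. -/
noncomputable def gpdf (σ x : ℝ) : ℝ :=
  (1 / (Real.sqrt (2 * Real.pi) * σ)) * Real.exp (-(x ^ 2) / (2 * σ ^ 2))

/-- The discrete Gaussian distribution over the lattice `Λ = bℤ` with parameter `σ`,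
evaluated at the lattice point `b * k`. -/
noncomputable def dgauss (b σ : ℝ) (k : ℤ) : ℝ :=
  gpdf σ (b * k) / ∑' j : ℤ, gpdf σ (b * j)

/-- The flatness factor of the lattice `Λ = bℤ` at parameter `σ`. -/
noncomputable def flatness (b σ : ℝ) : ℝ :=
  ⨆ x : ℝ, |b * (∑' k : ℤ, gpdf σ (x - b * k)) - 1|

/-- The bivariate Gaussian density with unit variances and correlation `ρ`. -/
noncomputable def fXY (ρ x y : ℝ) : ℝ :=
  (1 / (2 * Real.pi * Real.sqrt (1 - ρ ^ 2))) *
    Real.exp (-(x ^ 2 + y ^ 2 - 2 * ρ * x * y) / (2 * (1 - ρ ^ 2)))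

/-- The density of `(W̄ + √(1-ρ)N₁, W̄ + √(1-ρ)N₂)` where `W̄ ~ D_{Λ,√ρ}`, `Λ = bℤ`. -/
noncomputable def fXbarYbar (ρ b x y : ℝ) : ℝ :=
  ∑' k : ℤ, dgauss b (Real.sqrt ρ) k * gpdf (Real.sqrt (1 - ρ)) (x - b * k) *
    gpdf (Real.sqrt (1 - ρ)) (y - b * k)

open MeasureTheory ProbabilityTheory

lemma integrable_prod_of_nonneg {α β : Type*} [MeasurableSpace α] [MeasurableSpace β]
    {μ : Measure α} {ν : Measure β} [SFinite ν] {f : α × β → ℝ} (hf : 0 ≤ f)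
    (hfm : AEStronglyMeasurable f (μ.prod ν)) (hsec : ∀ x, Integrable (fun y => f (x, y)) ν)
    (hint : Integrable (fun x => ∫ y, f (x, y) ∂ν) μ) : Integrable f (μ.prod ν) :=
  (integrable_prod_iff hfm).2
    ⟨ae_of_all _ hsec, by simpa only [Real.norm_of_nonneg (hf _)] using hint⟩

lemma div_mem_Icc_of_abs_sub_one_le {u v ε : ℝ} (hε : ε < 1) (hu : |u - 1| ≤ ε)
    (hv : |v - 1| ≤ ε) : u / v ∈ Set.Icc ((1 - ε) / (1 + ε)) ((1 + ε) / (1 - ε)) := by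
  obtain ⟨hu₁, hu₂⟩ := abs_le.1 hu
  obtain ⟨hv₁, hv₂⟩ := abs_le.1 hv
  exact ⟨div_le_div₀ (by linarith) (by linarith) (by linarith) (by linarith),
    div_le_div₀ (by linarith) (by linarith) (by linarith) (by linarith)⟩

section Entropy

variable {α : Type*} {F G Q : α → ℝ} {L r C : ℝ}

lemma log_mem_Icc_of_ratio_bounds (hr : 0 < r) (hF : ∀ x, 0 < F x)
    (hlogF : ∀ x, log (F x) = -L - Q x) (hlo : ∀ x, r * F x ≤ G x) (hup : ∀ x, G x ≤ C * F x)
    (x : α) : log (G x) ∈ Set.Icc (log r - L - Q x) (log C - L - Q x) := by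
  have hrF := mul_pos hr (hF x)
  have hC := pos_of_mul_pos_left (hrF.trans_le ((hlo x).trans (hup x))) (hF x).le
  have h₁ := Real.log_le_log hrF (hlo x)
  have h₂ := Real.log_le_log (hrF.trans_le (hlo x)) (hup x)
  rw [Real.log_mul hr.ne' (hF x).ne', hlogF] at h₁
  rw [Real.log_mul hC.ne' (hF x).ne', hlogF] at h₂
  constructor <;> linarith

variable [MeasurableSpace α] {μ : Measure α}

lemma integrable_mul_log_of_ratio_bounds (hr : 0 < r) (hF : ∀ x, 0 < F x)
    (hlogF : ∀ x, log (F x) = -L - Q x) (hQ : ∀ x, 0 ≤ Q x) (hlo : ∀ x, r * F x ≤ G x)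
    (hup : ∀ x, G x ≤ C * F x) (hG : Integrable G μ) (hGQ : Integrable (fun x => G x * Q x) μ) :
    Integrable (fun x => G x * log (G x)) μ := by
  refine ((hG.const_mul (|log r| + |log C| + |L|)).add hGQ).mono'
    (hG.1.mul (Real.measurable_log.comp_aemeasurable hG.1.aemeasurable).aestronglyMeasurable)
    (ae_of_all _ fun x => ?_)
  have hG0 : 0 ≤ G x := (mul_pos hr (hF x)).le.trans (hlo x)
  obtain ⟨h₁, h₂⟩ := log_mem_Icc_of_ratio_bounds hr hF hlogF hlo hup x
  rw [norm_mul, Real.norm_of_nonneg hG0, Real.norm_eq_abs]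
  show G x * |log (G x)| ≤ (|log r| + |log C| + |L|) * G x + G x * Q x
  rw [mul_comm _ (G x), ← mul_add]
  refine mul_le_mul_of_nonneg_left (abs_le.2 ⟨?_, ?_⟩) hG0
  · linarith [neg_abs_le (log r), abs_nonneg (log C), le_abs_self L]
  · linarith [abs_nonneg (log r), le_abs_self (log C), neg_abs_le L, hQ x]

lemma le_neg_integral_mul_log_of_ratio_bounds (hr : 0 < r) (hF : ∀ x, 0 < F x)
    (hlogF : ∀ x, log (F x) = -L - Q x) (hQ : ∀ x, 0 ≤ Q x) (hQm : AEStronglyMeasurable Q μ)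
    (hlo : ∀ x, r * F x ≤ G x) (hup : ∀ x, G x ≤ C * F x) (hG : ∫ x, G x ∂μ = 1)
    (hFQ : Integrable (fun x => F x * Q x) μ) :
    L + r * ∫ x, F x * Q x ∂μ - log C ≤ -∫ x, G x * log (G x) ∂μ := by
  have hG0 (x : α) : 0 ≤ G x := (mul_pos hr (hF x)).le.trans (hlo x)
  have hGi : Integrable G μ := .of_integral_ne_zero (by rw [hG]; exact one_ne_zero)
  have hGQ : Integrable (fun x => G x * Q x) μ :=
    (hFQ.const_mul C).mono' (hGi.1.mul hQm) (ae_of_all _ fun x => by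
      rw [norm_mul, Real.norm_of_nonneg (hG0 x), Real.norm_of_nonneg (hQ x), ← mul_assoc]
      exact mul_le_mul_of_nonneg_right (hup x) (hQ x))
  have hupper : ∫ x, G x * log (G x) ∂μ ≤ ∫ x, (log C - L) * G x - G x * Q x ∂μ :=
    integral_mono (integrable_mul_log_of_ratio_bounds hr hF hlogF hQ hlo hup hGi hGQ)
      ((hGi.const_mul _).sub hGQ) fun x => by
        have := mul_le_mul_of_nonneg_left
          (log_mem_Icc_of_ratio_bounds hr hF hlogF hlo hup x).2 (hG0 x)
        linarith
  have hlower : r * ∫ x, F x * Q x ∂μ ≤ ∫ x, G x * Q x ∂μ := by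
    rw [← integral_const_mul]
    exact integral_mono (hFQ.const_mul r) hGQ fun x => by
      rw [← mul_assoc]
      exact mul_le_mul_of_nonneg_right (hlo x) (hQ x)
  rw [integral_sub (hGi.const_mul _) hGQ, integral_const_mul, hG, mul_one] at hupper
  linarith

end Entropy

lemma one_sub_five_mul_le {ε : ℝ} (hε₀ : 0 ≤ ε) (hε : ε < 1 / 2) :
    1 - 5 * ε ≤ (1 - ε) / (1 + ε) - log ((1 + ε) / (1 - ε)) := by
  have h₁ : log (1 + ε) ≤ ε := by linarith [Real.log_le_sub_one_of_pos (by linarith : 0 < 1 + ε)]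
  have h₂ : -(2 * ε) ≤ log (1 - ε) := by
    have := Real.one_sub_inv_le_log_of_pos (by linarith : 0 < 1 - ε)
    have : (1 - ε)⁻¹ ≤ 1 + 2 * ε := by
      rw [inv_eq_one_div, div_le_iff₀ (by linarith)]
      nlinarith
    linarith
  have h₃ : 1 - 2 * ε ≤ (1 - ε) / (1 + ε) := by
    rw [le_div_iff₀ (by linarith)]
    nlinarith
  rw [Real.log_div (by linarith) (by linarith)]
  linarith

section GaussianDensity

variable {σ : ℝ}

lemma gpdf_pos (hσ : 0 < σ) (x : ℝ) : 0 < gpdf σ x := by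
  unfold gpdf; positivity

lemma gpdf_nonneg (hσ : 0 ≤ σ) (x : ℝ) : 0 ≤ gpdf σ x := by
  unfold gpdf; positivity

lemma gpdf_neg (σ x : ℝ) : gpdf σ (-x) = gpdf σ x := by
  simp [gpdf]

@[fun_prop]
lemma continuous_gpdf (σ : ℝ) : Continuous (gpdf σ) := by
  unfold gpdf; fun_prop

lemma gpdf_eq_gaussianPDFReal (hσ : 0 ≤ σ) : gpdf σ = gaussianPDFReal 0 (σ ^ 2).toNNReal := by
  ext x
  simp only [gaussianPDFReal_def, gpdf, Real.coe_toNNReal _ (sq_nonneg σ), sub_zero]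
  rw [Real.sqrt_mul' _ (sq_nonneg σ), Real.sqrt_sq hσ, one_div]

lemma integrable_gpdf (hσ : 0 ≤ σ) : Integrable (gpdf σ) := by
  rw [gpdf_eq_gaussianPDFReal hσ]
  exact integrable_gaussianPDFReal _ _

lemma integral_gpdf (hσ : 0 < σ) : ∫ x, gpdf σ x = 1 := by
  rw [gpdf_eq_gaussianPDFReal hσ.le]
  exact integral_gaussianPDFReal_eq_one _ (by simpa using hσ.ne')

lemma integrable_gpdf_mul_sq (hσ : 0 < σ) : Integrable (fun x => gpdf σ x * x ^ 2) := by
  have hv : (σ ^ 2).toNNReal ≠ 0 := by simpa using hσ.ne'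
  have h := (memLp_id_gaussianReal (μ := 0) (v := (σ ^ 2).toNNReal) 2).integrable_sq
  rw [gaussianReal_of_var_ne_zero _ hv, integrable_withDensity_iff_integrable_smul'
    (measurable_gaussianPDF _ _) (ae_of_all _ fun _ => gaussianPDF_lt_top)] at h
  simpa [toReal_gaussianPDF, gpdf_eq_gaussianPDFReal hσ.le] using h

lemma integral_gpdf_mul_sq (hσ : 0 < σ) : ∫ x, gpdf σ x * x ^ 2 = σ ^ 2 := by
  have hv : (σ ^ 2).toNNReal ≠ 0 := by simpa using hσ.ne'
  have h := variance_of_integral_eq_zero (X := id) measurable_id.aemeasurable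
    (integral_id_gaussianReal (μ := 0) (v := (σ ^ 2).toNNReal))
  rw [variance_id_gaussianReal, integral_gaussianReal_eq_integral_smul hv] at h
  simpa [gpdf_eq_gaussianPDFReal hσ.le, sq_nonneg] using h.symm

lemma integrable_gpdf_mul_sq_add (hσ : 0 < σ) (α β : ℝ) :
    Integrable fun z => gpdf σ z * (α * z ^ 2 + β) := by
  simp_rw [mul_add, mul_left_comm _ α, mul_comm _ β]
  exact ((integrable_gpdf_mul_sq hσ).const_mul α).add ((integrable_gpdf hσ.le).const_mul β)

lemma integral_gpdf_mul_sq_add (hσ : 0 < σ) (α β : ℝ) :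
    ∫ z, gpdf σ z * (α * z ^ 2 + β) = α * σ ^ 2 + β := by
  simp_rw [mul_add, mul_left_comm _ α, mul_comm _ β]
  rw [integral_add ((integrable_gpdf_mul_sq hσ).const_mul α)
    ((integrable_gpdf hσ.le).const_mul β), integral_const_mul, integral_const_mul,
    integral_gpdf_mul_sq hσ, integral_gpdf hσ, mul_one]

end GaussianDensity

lemma gpdf_sqrt_mul_gpdf_sqrt {v w : ℝ} (hv : 0 < v) (hw : 0 < w) (s t : ℝ) :
    gpdf √w t * gpdf √v (s - t) =
      gpdf √(v + w) s * gpdf √(v * w / (v + w)) (t - w / (v + w) * s) := by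
  have hvw : 0 < v + w := by positivity
  have hsqrt : √w * √v = √(v + w) * √(v * w / (v + w)) := by
    rw [← Real.sqrt_mul hw.le, ← Real.sqrt_mul hvw.le]
    congr 1
    field_simp
  unfold gpdf
  rw [Real.sq_sqrt hv.le, Real.sq_sqrt hw.le, Real.sq_sqrt hvw.le, Real.sq_sqrt (by positivity),
    mul_mul_mul_comm, ← Real.exp_add, mul_mul_mul_comm _ (rexp _), ← Real.exp_add]
  congr 1
  · rw [div_mul_div_comm, div_mul_div_comm, mul_mul_mul_comm, hsqrt]
    ring
  · congr 1
    field_simp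
    ring

lemma fXY_eq_gpdf_mul_gpdf {ρ : ℝ} (hρ : |ρ| < 1) (x y : ℝ) :
    fXY ρ x y = gpdf 1 x * gpdf √(1 - ρ ^ 2) (y - ρ * x) := by
  have h : 0 < 1 - ρ ^ 2 := by nlinarith [sq_lt_one_iff_abs_lt_one ρ |>.2 hρ]
  unfold fXY gpdf
  rw [Real.sq_sqrt h.le, mul_mul_mul_comm, ← Real.exp_add, div_mul_div_comm, mul_one,
    mul_mul_mul_comm, Real.mul_self_sqrt (by positivity)]
  have := h.ne'
  congr 2
  · ring
  · field_simp
    ring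

-- Bayes' rule twice: the prior `N(0, ρ)` of `a` is updated by observing `x`, then `y`.
lemma gpdf_mul_gpdf_mul_gpdf {ρ : ℝ} (hρ0 : 0 < ρ) (hρ1 : ρ < 1) (a x y : ℝ) :
    gpdf √ρ a * gpdf √(1 - ρ) (x - a) * gpdf √(1 - ρ) (y - a) =
      fXY ρ x y * gpdf √(ρ * (1 - ρ) / (1 + ρ)) (ρ * (x + y) / (1 + ρ) - a) := by
  have h1 : 0 < 1 - ρ := by linarith
  have h2 : 0 < 1 + ρ := by linarith
  have h3 : 1 - ρ ^ 2 ≠ 0 := by nlinarith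
  have hx := gpdf_sqrt_mul_gpdf_sqrt h1 hρ0 x a
  have hy := gpdf_sqrt_mul_gpdf_sqrt h1 (mul_pos h1 hρ0) (y - ρ * x) (a - ρ * x)
  rw [sub_add_cancel, div_one, div_one, Real.sqrt_one] at hx
  rw [sub_sub_sub_cancel_right, show 1 - ρ + (1 - ρ) * ρ = 1 - ρ ^ 2 by ring,
    show (1 - ρ) * ((1 - ρ) * ρ) / (1 - ρ ^ 2) = ρ * (1 - ρ) / (1 + ρ) by field_simp; ring,
    show a - ρ * x - (1 - ρ) * ρ / (1 - ρ ^ 2) * (y - ρ * x) = -(ρ * (x + y) / (1 + ρ) - a) by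
      field_simp; ring, gpdf_neg] at hy
  rw [hx, mul_assoc, hy, fXY_eq_gpdf_mul_gpdf (abs_lt.2 ⟨by linarith, hρ1⟩), mul_assoc]

noncomputable def periodizedGpdf (b σ x : ℝ) : ℝ :=
  ∑' k : ℤ, gpdf σ (x - b * k)

section Periodized

variable {b σ : ℝ}

/-- The bound has the shape of `summable_pow_mul_jacobiTheta₂_term_bound`. -/
lemma gpdf_sub_mul_int_le (hσ : 0 < σ) (hb : 0 < b) {x R : ℝ} (hx : |x| ≤ R) (k : ℤ) :
    gpdf σ (x - b * k) ≤
      gpdf σ 0 * rexp (-π * (b ^ 2 / (2 * π * σ ^ 2) * k ^ 2 -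
        2 * (R * b / (2 * π * σ ^ 2)) * |(k : ℝ)|)) := by
  have hxk : x * k ≤ R * |(k : ℝ)| :=
    ((le_abs_self _).trans_eq (abs_mul _ _)).trans (by gcongr)
  have hsq : b ^ 2 * k ^ 2 - 2 * R * b * |(k : ℝ)| ≤ (x - b * k) ^ 2 := by
    nlinarith [sq_nonneg x, mul_le_mul_of_nonneg_left hxk hb.le]
  rw [show -π * (b ^ 2 / (2 * π * σ ^ 2) * k ^ 2 - 2 * (R * b / (2 * π * σ ^ 2)) * |(k : ℝ)|) =
    -(b ^ 2 * k ^ 2 - 2 * R * b * |(k : ℝ)|) / (2 * σ ^ 2) by field_simp]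
  unfold gpdf
  rw [zero_pow two_ne_zero, neg_zero, zero_div, Real.exp_zero, mul_one]
  gcongr

lemma summable_gpdf_sub_mul_int (hσ : 0 < σ) (hb : 0 < b) (x : ℝ) :
    Summable fun k : ℤ => gpdf σ (x - b * k) := by
  refine .of_nonneg_of_le (fun k => gpdf_nonneg hσ.le _) (gpdf_sub_mul_int_le hσ hb le_rfl) ?_
  simpa [Int.cast_abs] using
    (summable_pow_mul_jacobiTheta₂_term_bound (|x| * b / (2 * π * σ ^ 2))
      (T := b ^ 2 / (2 * π * σ ^ 2)) (by positivity) 0).mul_left (gpdf σ 0)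

lemma periodizedGpdf_nonneg (hσ : 0 ≤ σ) (b x : ℝ) : 0 ≤ periodizedGpdf b σ x :=
  tsum_nonneg fun _ => gpdf_nonneg hσ _

lemma periodizedGpdf_pos (hσ : 0 < σ) (hb : 0 < b) (x : ℝ) : 0 < periodizedGpdf b σ x :=
  (summable_gpdf_sub_mul_int hσ hb x).tsum_pos (fun _ => gpdf_nonneg hσ.le _) 0 (gpdf_pos hσ _)

lemma periodizedGpdf_sub_mul_int (b σ x : ℝ) (m : ℤ) :
    periodizedGpdf b σ (x - b * m) = periodizedGpdf b σ x := by
  unfold periodizedGpdf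
  rw [← (Equiv.subRight m).tsum_eq]
  simp only [Equiv.subRight_apply, Int.cast_sub]
  ring_nf

lemma bddAbove_range_periodizedGpdf (hσ : 0 < σ) (hb : 0 < b) :
    BddAbove (Set.range (periodizedGpdf b σ)) := by
  have hsum := (summable_pow_mul_jacobiTheta₂_term_bound (b / 2 * b / (2 * π * σ ^ 2))
      (T := b ^ 2 / (2 * π * σ ^ 2)) (by positivity) 0).mul_left (gpdf σ 0)
  simp only [pow_zero, one_mul, Int.cast_abs] at hsum
  -- by periodicity it suffices to bound `periodizedGpdf b σ x` for `|x| ≤ b / 2`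
  exact ⟨_, Set.forall_mem_range.2 fun x => by
    have hred : |x - b * round (x / b)| ≤ b / 2 := by
      have := abs_sub_round (x / b)
      rw [show x - b * round (x / b) = b * (x / b - round (x / b)) by field_simp, abs_mul,
        abs_of_pos hb]
      linarith [mul_le_mul_of_nonneg_left this hb.le]
    rw [← periodizedGpdf_sub_mul_int b σ x (round (x / b))]
    exact (summable_gpdf_sub_mul_int hσ hb _).tsum_le_tsum (gpdf_sub_mul_int_le hσ hb hred) hsum⟩

lemma flatness_nonneg (b σ : ℝ) : 0 ≤ flatness b σ :=
  Real.iSup_nonneg fun _ => abs_nonneg _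

lemma abs_mul_periodizedGpdf_sub_one_le_flatness (hσ : 0 < σ) (hb : 0 < b) (x : ℝ) :
    |b * periodizedGpdf b σ x - 1| ≤ flatness b σ := by
  obtain ⟨M, hM⟩ := bddAbove_range_periodizedGpdf hσ hb
  refine le_ciSup (f := fun x => |b * periodizedGpdf b σ x - 1|) ⟨b * M + 1, ?_⟩ x
  rintro _ ⟨y, rfl⟩
  have h0 := periodizedGpdf_nonneg hσ.le b y
  have hy : periodizedGpdf b σ y ≤ M := hM ⟨y, rfl⟩
  rw [abs_le]
  constructor <;> nlinarith

lemma measurable_periodizedGpdf (b σ : ℝ) : Measurable (periodizedGpdf b σ) :=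
  Measurable.tsum fun _ => (continuous_gpdf σ).measurable.comp (measurable_sub_const _)

end Periodized

section Smoothing

variable {b v w : ℝ}

lemma integrable_gpdf_sqrt_mul_gpdf_sqrt_sub (hv : 0 < v) (hw : 0 < w) (s : ℝ) :
    Integrable fun t => gpdf √w t * gpdf √v (s - t) := by
  simp_rw [gpdf_sqrt_mul_gpdf_sqrt hv hw s]
  exact ((integrable_gpdf (Real.sqrt_nonneg _)).comp_sub_right _).const_mul _

lemma integral_gpdf_sqrt_mul_gpdf_sqrt_sub (hv : 0 < v) (hw : 0 < w) (s : ℝ) :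
    ∫ t, gpdf √w t * gpdf √v (s - t) = gpdf √(v + w) s := by
  simp_rw [gpdf_sqrt_mul_gpdf_sqrt hv hw s]
  rw [integral_const_mul, integral_sub_right_eq_self (gpdf _),
    integral_gpdf (Real.sqrt_pos.2 (by positivity)), mul_one]

lemma periodizedGpdf_sqrt_add (hb : 0 < b) (hv : 0 < v) (hw : 0 < w) (x : ℝ) :
    periodizedGpdf b √(v + w) x = ∫ t, periodizedGpdf b √v (x - t) * gpdf √w t := by
  have hterm (k : ℤ) : gpdf √(v + w) (x - b * k) =
      ∫ t, gpdf √w t * gpdf √v (x - t - b * k) := by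
    simp_rw [sub_right_comm x _ (b * k)]
    exact (integral_gpdf_sqrt_mul_gpdf_sqrt_sub hv hw _).symm
  have hint (k : ℤ) : Integrable fun t => gpdf √w t * gpdf √v (x - t - b * k) := by
    simp_rw [sub_right_comm x _ (b * k)]
    exact integrable_gpdf_sqrt_mul_gpdf_sqrt_sub hv hw _
  unfold periodizedGpdf
  simp_rw [← tsum_mul_right, tsum_congr hterm, mul_comm _ (gpdf √w _)]
  refine integral_tsum_of_summable_integral_norm hint ?_
  simp_rw [Real.norm_of_nonneg (mul_nonneg (gpdf_nonneg (Real.sqrt_nonneg _) _)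
    (gpdf_nonneg (Real.sqrt_nonneg _) _)), ← hterm]
  exact summable_gpdf_sub_mul_int (Real.sqrt_pos.2 (by positivity)) hb x

lemma abs_mul_periodizedGpdf_sqrt_add_sub_one_le (hb : 0 < b) (hv : 0 < v) (hw : 0 < w)
    (x : ℝ) : |b * periodizedGpdf b √(v + w) x - 1| ≤ flatness b √v := by
  have hσ : 0 < √v := Real.sqrt_pos.2 hv
  have hg := integrable_gpdf (Real.sqrt_nonneg w)
  obtain ⟨M, hM⟩ := bddAbove_range_periodizedGpdf hσ hb
  have hθg : Integrable fun t => periodizedGpdf b √v (x - t) * gpdf √w t :=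
    hg.bdd_mul (c := M)
      ((measurable_periodizedGpdf b _).comp (measurable_const_sub x)).aestronglyMeasurable
      (ae_of_all _ fun t => by
        rw [Real.norm_of_nonneg (periodizedGpdf_nonneg hσ.le _ _)]
        exact hM ⟨_, rfl⟩)
  have hsmooth : b * periodizedGpdf b √(v + w) x - 1 =
      ∫ t, (b * periodizedGpdf b √v (x - t) - 1) * gpdf √w t := by
    simp_rw [sub_mul, one_mul, mul_assoc]
    rw [integral_sub (hθg.const_mul b) hg, integral_const_mul,
      integral_gpdf (Real.sqrt_pos.2 hw), periodizedGpdf_sqrt_add hb hv hw]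
  rw [hsmooth, ← Real.norm_eq_abs]
  calc ‖∫ t, (b * periodizedGpdf b √v (x - t) - 1) * gpdf √w t‖
      ≤ ∫ t, flatness b √v * gpdf √w t := by
        refine norm_integral_le_of_norm_le (hg.const_mul _) (ae_of_all _ fun t => ?_)
        rw [norm_mul, Real.norm_of_nonneg (gpdf_nonneg (Real.sqrt_nonneg _) _)]
        exact mul_le_mul_of_nonneg_right (abs_mul_periodizedGpdf_sub_one_le_flatness hσ hb _)
          (gpdf_nonneg (Real.sqrt_nonneg _) _)
    _ = flatness b √v := by
      rw [integral_const_mul, integral_gpdf (Real.sqrt_pos.2 hw), mul_one]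

end Smoothing

noncomputable def fXYExponent (ρ x y : ℝ) : ℝ :=
  (x ^ 2 + y ^ 2 - 2 * ρ * x * y) / (2 * (1 - ρ ^ 2))

section Bivariate

variable {ρ : ℝ}

lemma one_sub_sq_pos_of_abs_lt_one (hρ : |ρ| < 1) : 0 < 1 - ρ ^ 2 := by
  nlinarith [(sq_lt_one_iff_abs_lt_one ρ).2 hρ]

lemma fXYExponent_nonneg (hρ : |ρ| < 1) (x y : ℝ) : 0 ≤ fXYExponent ρ x y := by
  have h := abs_lt.1 hρ
  refine div_nonneg ?_ (by nlinarith [one_sub_sq_pos_of_abs_lt_one hρ])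
  nlinarith [sq_nonneg (x - y), sq_nonneg (x + y)]

@[fun_prop]
lemma continuous_fXYExponent (ρ : ℝ) :
    Continuous fun p : ℝ × ℝ => fXYExponent ρ p.1 p.2 := by
  unfold fXYExponent; fun_prop

lemma fXY_pos (hρ : |ρ| < 1) (x y : ℝ) : 0 < fXY ρ x y := by
  have := one_sub_sq_pos_of_abs_lt_one hρ
  unfold fXY; positivity

lemma log_fXY (hρ : |ρ| < 1) (x y : ℝ) :
    log (fXY ρ x y) = -log (2 * π * √(1 - ρ ^ 2)) - fXYExponent ρ x y := by
  have := one_sub_sq_pos_of_abs_lt_one hρ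
  rw [fXY, Real.log_mul (by positivity) (Real.exp_pos _).ne', Real.log_exp, one_div,
    Real.log_inv, fXYExponent, neg_div, ← sub_eq_add_neg]

lemma fXY_mul_fXYExponent (hρ : |ρ| < 1) (x y : ℝ) :
    fXY ρ x y * fXYExponent ρ x y = gpdf 1 x * (gpdf √(1 - ρ ^ 2) (y - ρ * x) *
      (1 / (2 * (1 - ρ ^ 2)) * (y - ρ * x) ^ 2 + x ^ 2 / 2)) := by
  have := (one_sub_sq_pos_of_abs_lt_one hρ).ne'
  rw [fXY_eq_gpdf_mul_gpdf hρ, fXYExponent, mul_assoc]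
  congr 2
  field_simp
  ring

lemma integrable_fXY_mul_fXYExponent_right (hρ : |ρ| < 1) (x : ℝ) :
    Integrable fun y => fXY ρ x y * fXYExponent ρ x y := by
  simp_rw [fXY_mul_fXYExponent hρ]
  exact ((integrable_gpdf_mul_sq_add (Real.sqrt_pos.2 (one_sub_sq_pos_of_abs_lt_one hρ)) _ _
    ).comp_sub_right (ρ * x)).const_mul _

lemma integral_fXY_mul_fXYExponent_right (hρ : |ρ| < 1) (x : ℝ) :
    ∫ y, fXY ρ x y * fXYExponent ρ x y = gpdf 1 x * (1 / 2 * x ^ 2 + 1 / 2) := by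
  have h := one_sub_sq_pos_of_abs_lt_one hρ
  simp_rw [fXY_mul_fXYExponent hρ]
  rw [integral_const_mul, integral_sub_right_eq_self
    (fun z => gpdf √(1 - ρ ^ 2) z * (1 / (2 * (1 - ρ ^ 2)) * z ^ 2 + x ^ 2 / 2)),
    integral_gpdf_mul_sq_add (Real.sqrt_pos.2 h), Real.sq_sqrt h.le]
  field_simp
  ring

lemma integrable_fXY_mul_fXYExponent (hρ : |ρ| < 1) :
    Integrable fun p : ℝ × ℝ => fXY ρ p.1 p.2 * fXYExponent ρ p.1 p.2 := by
  rw [Measure.volume_eq_prod]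
  refine integrable_prod_of_nonneg
    (fun p => mul_nonneg (fXY_pos hρ _ _).le (fXYExponent_nonneg hρ _ _))
    (by unfold fXY; fun_prop) (integrable_fXY_mul_fXYExponent_right hρ) ?_
  simp_rw [integral_fXY_mul_fXYExponent_right hρ]
  exact integrable_gpdf_mul_sq_add one_pos _ _

lemma integral_fXY_mul_fXYExponent (hρ : |ρ| < 1) :
    ∫ p : ℝ × ℝ, fXY ρ p.1 p.2 * fXYExponent ρ p.1 p.2 = 1 := by
  have h := integrable_fXY_mul_fXYExponent hρ
  rw [Measure.volume_eq_prod] at h ⊢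
  rw [integral_prod _ h]
  simp_rw [integral_fXY_mul_fXYExponent_right hρ]
  rw [integral_gpdf_mul_sq_add one_pos]
  norm_num

end Bivariate

section DiscreteGaussian

variable {b σ : ℝ}

lemma dgauss_eq (b σ : ℝ) (k : ℤ) : dgauss b σ k = gpdf σ (b * k) / periodizedGpdf b σ 0 := by
  rw [dgauss, periodizedGpdf]
  simp_rw [zero_sub, gpdf_neg]

lemma dgauss_nonneg (hσ : 0 ≤ σ) (b : ℝ) (k : ℤ) : 0 ≤ dgauss b σ k := by
  rw [dgauss_eq]
  exact div_nonneg (gpdf_nonneg hσ _) (periodizedGpdf_nonneg hσ _ _)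

lemma hasSum_dgauss (hσ : 0 < σ) (hb : 0 < b) : HasSum (dgauss b σ) 1 := by
  have h := (summable_gpdf_sub_mul_int hσ hb 0).hasSum.div_const (periodizedGpdf b σ 0)
  rw [← periodizedGpdf, div_self (periodizedGpdf_pos hσ hb 0).ne'] at h
  exact h.congr_fun fun k => by rw [dgauss_eq, zero_sub, gpdf_neg]

end DiscreteGaussian

section Mixture

variable {ρ b : ℝ}

lemma fXbarYbar_eq (hρ0 : 0 < ρ) (hρ1 : ρ < 1) (x y : ℝ) :
    fXbarYbar ρ b x y = fXY ρ x y *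
      periodizedGpdf b √(ρ * (1 - ρ) / (1 + ρ)) (ρ * (x + y) / (1 + ρ)) /
        periodizedGpdf b √ρ 0 := by
  have hterm (k : ℤ) : dgauss b √ρ k * gpdf √(1 - ρ) (x - b * k) * gpdf √(1 - ρ) (y - b * k) =
      fXY ρ x y / periodizedGpdf b √ρ 0 *
        gpdf √(ρ * (1 - ρ) / (1 + ρ)) (ρ * (x + y) / (1 + ρ) - b * k) := by
    rw [dgauss_eq, div_mul_eq_mul_div, div_mul_eq_mul_div, gpdf_mul_gpdf_mul_gpdf hρ0 hρ1]
    ring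
  rw [fXbarYbar, tsum_congr hterm, tsum_mul_left, div_mul_eq_mul_div]
  rfl

lemma fXbarYbar_bounds (hb : 0 < b) (hρ0 : 0 < ρ) (hρ1 : ρ < 1)
    (hε : flatness b √(ρ * (1 - ρ) / (1 + ρ)) < 1) (x y : ℝ) :
    (1 - flatness b √(ρ * (1 - ρ) / (1 + ρ))) / (1 + flatness b √(ρ * (1 - ρ) / (1 + ρ))) *
        fXY ρ x y ≤ fXbarYbar ρ b x y ∧
      fXbarYbar ρ b x y ≤ (1 + flatness b √(ρ * (1 - ρ) / (1 + ρ))) /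
        (1 - flatness b √(ρ * (1 - ρ) / (1 + ρ))) * fXY ρ x y := by
  have hv : 0 < ρ * (1 - ρ) / (1 + ρ) := div_pos (mul_pos hρ0 (by linarith)) (by linarith)
  have hw : 0 < 2 * ρ ^ 2 / (1 + ρ) := div_pos (by positivity) (by linarith)
  -- `N(0, ρ)` is `N(0, ρ(1-ρ)/(1+ρ))` smoothed by `N(0, 2ρ²/(1+ρ))`
  have hZ := abs_mul_periodizedGpdf_sqrt_add_sub_one_le hb hv hw 0
  rw [show ρ * (1 - ρ) / (1 + ρ) + 2 * ρ ^ 2 / (1 + ρ) = ρ by field_simp; ring] at hZ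
  have hθ := abs_mul_periodizedGpdf_sub_one_le_flatness (Real.sqrt_pos.2 hv) hb
    (ρ * (x + y) / (1 + ρ))
  have hratio := div_mem_Icc_of_abs_sub_one_le hε hθ hZ
  rw [mul_div_mul_left _ _ hb.ne'] at hratio
  have hF := (fXY_pos (abs_lt.2 ⟨by linarith, hρ1⟩) x y).le
  rw [fXbarYbar_eq hρ0 hρ1, mul_div_assoc (fXY ρ x y)]
  exact ⟨by rw [mul_comm]; exact mul_le_mul_of_nonneg_left hratio.1 hF,
    by rw [mul_comm _ (fXY ρ x y)]; exact mul_le_mul_of_nonneg_left hratio.2 hF⟩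

lemma integral_fXbarYbar (hb : 0 < b) (hρ0 : 0 < ρ) (hρ1 : ρ < 1) :
    ∫ p : ℝ × ℝ, fXbarYbar ρ b p.1 p.2 = 1 := by
  have hσ : 0 ≤ √(1 - ρ) := Real.sqrt_nonneg _
  have hg (k : ℤ) := (integrable_gpdf hσ).comp_sub_right (b * k)
  have hint (k : ℤ) : Integrable (fun p : ℝ × ℝ =>
      dgauss b √ρ k * gpdf √(1 - ρ) (p.1 - b * k) * gpdf √(1 - ρ) (p.2 - b * k))
      (volume.prod volume) :=
    ((hg k).const_mul _).mul_prod (hg k)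
  have hterm (k : ℤ) : ∫ p : ℝ × ℝ, dgauss b √ρ k * gpdf √(1 - ρ) (p.1 - b * k) *
      gpdf √(1 - ρ) (p.2 - b * k) ∂(volume.prod volume) = dgauss b √ρ k := by
    refine (integral_prod_mul (fun x => dgauss b √ρ k * gpdf √(1 - ρ) (x - b * k))
      (fun y => gpdf √(1 - ρ) (y - b * k))).trans ?_
    rw [integral_const_mul, integral_sub_right_eq_self (gpdf _),
      integral_gpdf (Real.sqrt_pos.2 (by linarith)), mul_one, mul_one]
  have hsum := hasSum_dgauss (Real.sqrt_pos.2 hρ0) hb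
  simp_rw [fXbarYbar, Measure.volume_eq_prod]
  rw [← integral_tsum_of_summable_integral_norm hint, tsum_congr hterm, hsum.tsum_eq]
  refine hsum.summable.congr fun k => (hterm k).symm.trans
    (integral_congr_ae (ae_of_all _ fun p => (Real.norm_of_nonneg ?_).symm))
  exact mul_nonneg (mul_nonneg (dgauss_nonneg (Real.sqrt_nonneg _) b k) (gpdf_nonneg hσ _))
    (gpdf_nonneg hσ _)

end Mixture

theorem mixture_entropy_lower_bound_general (ρ b : ℝ) (hb : 0 < b) (hρ0 : 0 < ρ) (hρ1 : ρ < 1)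
    (hε : flatness b (Real.sqrt (ρ * (1 - ρ) / (1 + ρ))) < 1 / 2) :
    -∫ p : ℝ × ℝ, fXbarYbar ρ b p.1 p.2 * Real.log (fXbarYbar ρ b p.1 p.2) ≥
      Real.log (2 * Real.pi * Real.sqrt (1 - ρ ^ 2)) + 1 -
        5 * flatness b (Real.sqrt (ρ * (1 - ρ) / (1 + ρ))) := by
  have hε₀ := flatness_nonneg b √(ρ * (1 - ρ) / (1 + ρ))
  have hρ : |ρ| < 1 := abs_lt.2 ⟨by linarith, hρ1⟩
  have hbounds := fXbarYbar_bounds hb hρ0 hρ1 (by linarith)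
  have key := le_neg_integral_mul_log_of_ratio_bounds (μ := volume)
    (F := fun p : ℝ × ℝ => fXY ρ p.1 p.2) (G := fun p => fXbarYbar ρ b p.1 p.2)
    (Q := fun p => fXYExponent ρ p.1 p.2) (div_pos (by linarith) (by linarith))
    (fun p => fXY_pos hρ _ _) (fun p => log_fXY hρ _ _) (fun p => fXYExponent_nonneg hρ _ _)
    (by fun_prop) (fun p => (hbounds p.1 p.2).1) (fun p => (hbounds p.1 p.2).2)
    (integral_fXbarYbar hb hρ0 hρ1) (integrable_fXY_mul_fXYExponent hρ)
  rw [integral_fXY_mul_fXYExponent hρ, mul_one] at key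
  linarith [one_sub_five_mul_le hε₀ hε]

/-- Lemma 1, second part: if `ε = ε_Λ(√(ρ(1-ρ)/(1+ρ))) < 1/2` and the second
moment of `D_{Λ,√ρ}` is at least `ρ(1-2ε)`, then the differential entropy of the mixture
density is at least `ln(2π√(1-ρ²)) + 1 − 5ε`; equivalently, the entropy gap
`h(f_{X,Y}) − h(f_{X̄,Ȳ}) = I(X,Y;W) − I(X̄,Ȳ;W̄)` is at most `5ε` nats. -/
theorem mixture_entropy_lower_bound (ρ b : ℝ) (hb : 0 < b) (hρ0 : 0 < ρ) (hρ1 : ρ < 1)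
    (hε : flatness b (Real.sqrt (ρ * (1 - ρ) / (1 + ρ))) < 1 / 2)
    (hm₂ : (∑' k : ℤ, dgauss b (Real.sqrt ρ) k * (b * k) ^ 2) ≥
      ρ * (1 - 2 * flatness b (Real.sqrt (ρ * (1 - ρ) / (1 + ρ))))) :
    -∫ p : ℝ × ℝ, fXbarYbar ρ b p.1 p.2 * Real.log (fXbarYbar ρ b p.1 p.2) ≥
      Real.log (2 * Real.pi * Real.sqrt (1 - ρ ^ 2)) + 1 -
        5 * flatness b (Real.sqrt (ρ * (1 - ρ) / (1 + ρ))) :=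
  mixture_entropy_lower_bound_general ρ b hb hρ0 hρ1 hε
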